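/- Let S be a supercharacter theory of a finite group G, and suppose [G,S] is not contained in ζ_m(S) for some m ≥ 1. Then ζ_{m+1}(S) ≤ V(S). -/

import Mathlib

open scoped BigOperators Pointwise

/-- `f : G → ℂ` is an irreducible character of `G`. -/
def IsIrrChar (G : Type) [Group G] [Fintype G] (f : G → ℂ) : Prop :=
  ∃ V : FDRep ℂ G, CategoryTheory.Simple V ∧ V.character = f

/-- A supercharacter theory of a finite group `G` (Diaconis–Isaacs): a partition
`parts` of the set of irreducible characters of `G` together with a partition of `G`
into `S`-classes (`cls g` is the class of `g`), such that `{1}` is a class, the number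
of parts equals the number of classes, and each supercharacter
`σ_X = ∑ χ ∈ X, χ(1)·χ` is constant on every class. -/
structure SCT (G : Type) [Group G] [Fintype G] where
  parts : Finset (Finset (G → ℂ))
  cls : G → Set G
  parts_cover : ∀ f : G → ℂ, IsIrrChar G f ↔ ∃ X ∈ parts, f ∈ X
  parts_disj : ∀ X ∈ parts, ∀ Y ∈ parts, X ≠ Y → Disjoint X Y
  parts_nonempty : ∀ X ∈ parts, X.Nonempty
  mem_cls : ∀ g : G, g ∈ cls g
  cls_eq : ∀ g h : G, h ∈ cls g → cls h = cls g
  cls_one : cls (1 : G) = {1}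
  card_eq : parts.card = Nat.card (Set.range cls)
  const : ∀ X ∈ parts, ∀ g h : G, h ∈ cls g →
    (∑ χ ∈ X, χ 1 * χ h) = (∑ χ ∈ X, χ 1 * χ g)

variable {G : Type} [Group G] [Fintype G]

namespace SCT

/-- The supercharacter attached to a part `X`. -/
noncomputable def superchar (_S : SCT G) (X : Finset (G → ℂ)) : G → ℂ := fun g => ∑ χ ∈ X, χ 1 * χ g

/-- The set `Irr(S)` of `S`-characters. -/
def Irr (S : SCT G) : Set (G → ℂ) := {f | ∃ X ∈ S.parts, f = S.superchar X}

end SCT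

/-- The kernel of a character-like function `f : G → ℂ`. -/
def charKer (f : G → ℂ) : Subgroup G where
  carrier := {g | ∀ h, f (g * h) = f h}
  one_mem' := by intro h; simp
  mul_mem' := by intro a b ha hb h; rw [mul_assoc, ha, hb]
  inv_mem' := by
    intro a ha h
    have := ha (a⁻¹ * h)
    rw [mul_inv_cancel_left] at this
    exact this.symm

namespace SCT

/-- `[H,S]`, the subgroup generated by the `g⁻¹k` with `g ∈ H`, `k ∈ Cl_S(g)`. -/
def comm (S : SCT G) (H : Subgroup G) : Subgroup G :=
  Subgroup.closure {x | ∃ g ∈ H, ∃ k ∈ S.cls g, x = g⁻¹ * k}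

/-- `[G,S]`. -/
def derived (S : SCT G) : Subgroup G := S.comm ⊤

/-- `Irr(S | N)`: the `S`-characters whose kernel does not contain `N`. -/
def IrrRel (S : SCT G) (N : Subgroup G) : Set (G → ℂ) :=
  {f | f ∈ S.Irr ∧ ¬ N ≤ charKer f}

/-- `g` is an `S`-Camina element: all of `Irr(S | [G,S])` vanishes at `g`. -/
def IsCaminaElt (S : SCT G) (g : G) : Prop :=
  ∀ f ∈ S.IrrRel S.derived, f g = 0

/-- `N` is `S`-normal: a union of `S`-classes. -/
def IsNormal (S : SCT G) (N : Subgroup G) : Prop :=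
  ∀ g ∈ N, S.cls g ⊆ N

/-- `(G,N)` is a generalised `S`-Camina pair. -/
def IsGCP (S : SCT G) (N : Subgroup G) : Prop :=
  S.IsNormal N ∧ ∀ g : G, g ∉ N → S.IsCaminaElt g

/-- The set `Z(S)` of elements with singleton `S`-class. -/
def centerSet (S : SCT G) : Set G := {g | S.cls g = {g}}

/-- The vanishing-off subgroup `V(S | N)`. -/
def V (S : SCT G) (N : Subgroup G) : Subgroup G :=
  Subgroup.closure {g | ∃ f ∈ S.IrrRel N, f g ≠ 0}

/-- `V(S) = V(S | [G,S])`. -/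
def VS (S : SCT G) : Subgroup G := S.V S.derived

/-- `U(S | N)`: the product of all `S`-normal subgroups `H` with `V(S | H) ≤ N`. -/
def U (S : SCT G) (N : Subgroup G) : Subgroup G :=
  ⨆ (H : Subgroup G) (_ : S.IsNormal H ∧ S.V H ≤ N), H

/-- The upper `S`-central series: `ζ_0 = 1` and `ζ_{i+1}/ζ_i = Z(S^{G/ζ_i})`,
i.e. `ζ_{i+1}` consists of the `g` whose `S`-class maps onto the single coset `gζ_i`. -/
def zeta (S : SCT G) : ℕ → Subgroup G
  | 0 => ⊥
  | i + 1 => Subgroup.closure {g | ∀ k ∈ S.cls g, g⁻¹ * k ∈ S.zeta i}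

/-- The lower `S`-central series `γ_1 = G`, `γ_{i+1} = [γ_i, S]` (with `γ_0 := G`). -/
def gamma (S : SCT G) : ℕ → Subgroup G
  | 0 => ⊤
  | 1 => ⊤
  | n + 2 => S.comm (S.gamma (n + 1))

/-- The series `V_1(S) = V(S)`, `V_{i+1}(S) = [V_i(S), S]` (with `V_0 := V(S)`). -/
def Vseq (S : SCT G) : ℕ → Subgroup G
  | 0 => S.VS
  | 1 => S.VS
  | n + 2 => S.comm (S.Vseq (n + 1))

/-- `G` is a `VZ(S)`-group: every member of `Irr(S | [G,S])` vanishes off `Z(S)`. -/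
def IsVZ (S : SCT G) : Prop :=
  ∀ f ∈ S.IrrRel S.derived, ∀ g : G, g ∉ S.centerSet → f g = 0

end SCT


/-!
Suppose `N ≤ V(S)`, `Cl_S(g) ⊆ gN` and `g ∉ V(S)`. Then `Cl_S(g)⁻¹` misses `V(S)`, so every
supercharacter whose kernel does not contain `[G,S]` vanishes on it. By column orthogonality the
indicator of `Cl_S(g)` is then a combination of supercharacters whose kernels contain `[G,S]`,
hence `g[G,S] ⊆ Cl_S(g) ⊆ gN`, i.e. `[G,S] ≤ N`. Taking `N = ζ_i(S)` for `i ≤ m` (none of which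
contains `[G,S]`, as the series increases) gives `ζ_{i+1}(S) ≤ V(S)` by induction on `i`.
-/

namespace IsIrrChar

variable {χ ψ : G → ℂ}

theorem map_mul_comm (hχ : IsIrrChar G χ) (a b : G) : χ (a * b) = χ (b * a) := by
  obtain ⟨V, -, rfl⟩ := hχ
  exact FDRep.char_mul_comm V b a

open scoped Classical in
theorem sum_mul_inv (hχ : IsIrrChar G χ) (hψ : IsIrrChar G ψ) :
    ∑ g : G, χ g * ψ g⁻¹ = if χ = ψ then (Nat.card G : ℂ) else 0 := by
  obtain ⟨V, hV, rfl⟩ := hχ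
  obtain ⟨W, hW, rfl⟩ := hψ
  have hcard : (Nat.card G : ℂ) ≠ 0 := Nat.cast_ne_zero.mpr Nat.card_pos.ne'
  let _ : Invertible (Nat.card G : ℂ) := invertibleOfNonzero hcard
  have orth : ∀ (V W : FDRep ℂ G), CategoryTheory.Simple V → CategoryTheory.Simple W →
      ∑ g : G, V.character g * W.character g⁻¹ =
        if Nonempty (V ≅ W) then (Nat.card G : ℂ) else 0 := by
    intro V W _ _
    have h := FDRep.char_orthonormal V W
    rw [inv_mul_eq_iff_eq_mul₀ hcard] at h
    rw [h]
    split_ifs <;> simp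
  by_cases hiso : Nonempty (V ≅ W)
  · rw [if_pos (FDRep.char_iso hiso.some), orth V W hV hW, if_pos hiso]
  · have hne : V.character ≠ W.character := fun heq => hcard <| by
      have hVW := orth V W hV hW
      rwa [if_neg hiso, ← heq, orth V V hV hV, if_pos ⟨CategoryTheory.Iso.refl V⟩] at hVW
    rw [if_neg hne, orth V W hV hW, if_neg hiso]

theorem exists_nat_pos_map_one (hχ : IsIrrChar G χ) : ∃ n : ℕ, 0 < n ∧ χ 1 = n := by
  have hsum := hχ.sum_mul_inv hχ
  obtain ⟨V, -, rfl⟩ := hχ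
  refine ⟨Module.finrank ℂ V, Nat.pos_of_ne_zero fun h0 => ?_, FDRep.char_one V⟩
  have : Subsingleton V := Module.finrank_zero_iff.mp h0
  have hzero : ∀ g : G, V.character g = 0 := fun g => by
    simp [FDRep.character, Subsingleton.elim (V.ρ g) 0]
  simp [hzero, eq_comm, Fintype.card_ne_zero] at hsum

end IsIrrChar

namespace SCT

variable (S : SCT G)

theorem isIrrChar_of_mem {X : Finset (G → ℂ)} (hX : X ∈ S.parts) {χ : G → ℂ} (hχ : χ ∈ X) :
    IsIrrChar G χ :=
  (S.parts_cover χ).mpr ⟨X, hX, hχ⟩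

theorem superchar_mul_comm {X : Finset (G → ℂ)} (hX : X ∈ S.parts) (a b : G) :
    S.superchar X (a * b) = S.superchar X (b * a) :=
  Finset.sum_congr rfl fun χ hχ => by rw [(S.isIrrChar_of_mem hX hχ).map_mul_comm]

theorem superchar_one_ne_zero {X : Finset (G → ℂ)} (hX : X ∈ S.parts) :
    S.superchar X 1 ≠ 0 := by
  choose! n hpos hval using fun χ (hχ : χ ∈ X) => (S.isIrrChar_of_mem hX hχ).exists_nat_pos_map_one
  have hcast : S.superchar X 1 = ((∑ χ ∈ X, n χ * n χ : ℕ) : ℂ) := by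
    push_cast
    exact Finset.sum_congr rfl fun χ hχ => by rw [hval χ hχ]
  obtain ⟨χ₀, hχ₀⟩ := S.parts_nonempty X hX
  rw [hcast, Nat.cast_ne_zero, ← Nat.pos_iff_ne_zero]
  exact Finset.sum_pos' (fun _ _ => Nat.zero_le _)
    ⟨χ₀, hχ₀, Nat.mul_pos (hpos χ₀ hχ₀) (hpos χ₀ hχ₀)⟩

open scoped Classical in
theorem sum_superchar_mul_superchar_inv {X Y : Finset (G → ℂ)} (hX : X ∈ S.parts)
    (hY : Y ∈ S.parts) :
    ∑ g : G, S.superchar X g * S.superchar Y g⁻¹ =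
      if X = Y then (Nat.card G : ℂ) * S.superchar X 1 else 0 := by
  calc ∑ g : G, S.superchar X g * S.superchar Y g⁻¹
      = ∑ χ ∈ X, ∑ ψ ∈ Y, χ 1 * ψ 1 * ∑ g : G, χ g * ψ g⁻¹ := by
        simp only [superchar, Finset.sum_mul_sum]
        simp only [Finset.mul_sum]
        conv_lhs => rw [Finset.sum_comm]
        refine Finset.sum_congr rfl fun χ _ => ?_
        conv_lhs => rw [Finset.sum_comm]
        exact Finset.sum_congr rfl fun ψ _ => Finset.sum_congr rfl fun g _ => by ring
    _ = ∑ χ ∈ X, ∑ ψ ∈ Y, if χ = ψ then (Nat.card G : ℂ) * (χ 1 * χ 1) else 0 :=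
        Finset.sum_congr rfl fun χ hχ => Finset.sum_congr rfl fun ψ hψ => by
          rw [(S.isIrrChar_of_mem hX hχ).sum_mul_inv (S.isIrrChar_of_mem hY hψ)]
          split_ifs with h
          · subst h; ring
          · exact mul_zero _
    _ = if X = Y then (Nat.card G : ℂ) * S.superchar X 1 else 0 := by
        split_ifs with hXY
        · subst hXY
          simp only [Finset.sum_ite_eq, superchar, Finset.mul_sum]
          exact Finset.sum_congr rfl fun χ hχ => if_pos hχ
        · refine Finset.sum_eq_zero fun χ hχ => Finset.sum_eq_zero fun ψ hψ => if_neg ?_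
          rintro rfl
          exact Finset.disjoint_left.mp (S.parts_disj X hX Y hY hXY) hχ hψ

theorem cls_eq_cls_iff {x g : G} : S.cls x = S.cls g ↔ x ∈ S.cls g :=
  ⟨fun h => h ▸ S.mem_cls x, S.cls_eq g x⟩

theorem superchar_eq_of_cls_eq {X : Finset (G → ℂ)} (hX : X ∈ S.parts) {x y : G}
    (h : S.cls x = S.cls y) : S.superchar X x = S.superchar X y :=
  S.const X hX y x (S.cls_eq_cls_iff.mp h)

noncomputable def table : Matrix S.parts (Set.range S.cls) ℂ :=
  fun X K => S.superchar X (Set.rangeSplitting S.cls K)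

open scoped Classical in
/-- Row orthogonality of supercharacters makes this a right inverse of `table`. -/
noncomputable def tableInv : Matrix (Set.range S.cls) S.parts ℂ :=
  fun K Y => (∑ x with Set.rangeFactorization S.cls x = K, S.superchar Y x⁻¹) /
    (Nat.card G * S.superchar Y 1)

theorem table_apply_rangeFactorization (X : S.parts) (y : G) :
    S.table X (Set.rangeFactorization S.cls y) = S.superchar X y :=
  S.superchar_eq_of_cls_eq X.2 (Set.apply_rangeSplitting S.cls _)

open scoped Classical in
theorem table_mul_tableInv : S.table * S.tableInv = 1 := by
  ext X Y
  have hterm (K) : S.table X K * S.tableInv K Y =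
      (∑ x with Set.rangeFactorization S.cls x = K, S.superchar X x * S.superchar Y x⁻¹) /
        (Nat.card G * S.superchar Y 1) := by
    rw [tableInv, mul_div_assoc', Finset.mul_sum]
    refine congrArg (· / _) (Finset.sum_congr rfl fun x hx => ?_)
    rw [← (Finset.mem_filter.mp hx).2, table_apply_rangeFactorization]
  rw [Matrix.mul_apply, Finset.sum_congr rfl fun K _ => hterm K, ← Finset.sum_div,
    Finset.sum_fiberwise, S.sum_superchar_mul_superchar_inv X.2 Y.2, Matrix.one_apply]
  by_cases hXY : X = Y
  · subst hXY
    rw [if_pos rfl, if_pos rfl]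
    exact div_self (mul_ne_zero (Nat.cast_ne_zero.mpr Nat.card_pos.ne')
      (S.superchar_one_ne_zero X.2))
  · rw [if_neg (hXY ∘ Subtype.ext), if_neg hXY, zero_div]

theorem tableInv_mul_table : S.tableInv * S.table = 1 :=
  (Matrix.mul_eq_one_comm_of_card_eq _ _ _ <| by
    rw [Fintype.card_coe, S.card_eq, Nat.card_eq_fintype_card]).mp S.table_mul_tableInv

open scoped Classical in
theorem indicator_cls_eq_sum_superchar (g y : G) :
    (if y ∈ S.cls g then 1 else 0) = ∑ Y ∈ S.parts,
      (∑ x with x ∈ S.cls g, S.superchar Y x⁻¹) / (Nat.card G * S.superchar Y 1) *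
        S.superchar Y y := by
  have cl_eq_iff {x z : G} : Set.rangeFactorization S.cls x = Set.rangeFactorization S.cls z ↔
      x ∈ S.cls z :=
    Subtype.ext_iff.trans S.cls_eq_cls_iff
  have hentry := congrFun (congrFun S.tableInv_mul_table (Set.rangeFactorization S.cls g))
    (Set.rangeFactorization S.cls y)
  simp only [Matrix.mul_apply, Matrix.one_apply, eq_comm.trans cl_eq_iff] at hentry
  rw [← hentry, ← Finset.sum_coe_sort S.parts]
  refine Finset.sum_congr rfl fun Y _ => ?_
  rw [table_apply_rangeFactorization, tableInv, Finset.filter_congr fun x _ => cl_eq_iff]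

theorem mem_VS_of_superchar_ne_zero {Y : Finset (G → ℂ)} (hY : Y ∈ S.parts)
    (hker : ¬ S.derived ≤ charKer (S.superchar Y)) {x : G} (hx : S.superchar Y x ≠ 0) :
    x ∈ S.VS :=
  Subgroup.subset_closure ⟨S.superchar Y, ⟨⟨Y, hY, rfl⟩, hker⟩, hx⟩

theorem mul_mem_cls_of_superchar_inv_eq_zero (M : Subgroup G) {g : G}
    (hvan : ∀ Y ∈ S.parts, ¬ M ≤ charKer (S.superchar Y) → ∀ x ∈ S.cls g, S.superchar Y x⁻¹ = 0)
    {d : G} (hd : d ∈ M) : g * d ∈ S.cls g := by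
  classical
  have key : (if g * d ∈ S.cls g then (1 : ℂ) else 0) = if g ∈ S.cls g then 1 else 0 := by
    rw [S.indicator_cls_eq_sum_superchar, S.indicator_cls_eq_sum_superchar]
    refine Finset.sum_congr rfl fun Y hY => ?_
    by_cases hker : M ≤ charKer (S.superchar Y)
    · rw [S.superchar_mul_comm hY, hker hd g]
    · rw [Finset.sum_eq_zero fun x hx => hvan Y hY hker x (Finset.mem_filter.mp hx).2,
        zero_div, zero_mul, zero_mul]
  by_contra hgd
  rw [if_neg hgd, if_pos (S.mem_cls g)] at key
  exact zero_ne_one key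

theorem derived_le_of_forall_inv_mul_mem {N : Subgroup G} (hNV : N ≤ S.VS) {g : G}
    (hg : g ∉ S.VS) (hcls : ∀ k ∈ S.cls g, g⁻¹ * k ∈ N) : S.derived ≤ N := by
  have hvan : ∀ Y ∈ S.parts, ¬ S.derived ≤ charKer (S.superchar Y) →
      ∀ x ∈ S.cls g, S.superchar Y x⁻¹ = 0 := by
    refine fun Y hY hker x hx => by_contra fun hne => hg ?_
    have hx' : x⁻¹ ∈ S.VS := S.mem_VS_of_superchar_ne_zero hY hker hne
    have : g⁻¹ = (g⁻¹ * x) * x⁻¹ := by group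
    exact inv_mem_iff.mp (this ▸ mul_mem (hNV (hcls x hx)) hx')
  intro d hd
  simpa using hcls _ (S.mul_mem_cls_of_superchar_inv_eq_zero S.derived hvan hd)

theorem closure_setOf_inv_mul_mem_le_VS {N : Subgroup G} (hNV : N ≤ S.VS)
    (hN : ¬ S.derived ≤ N) : Subgroup.closure {g | ∀ k ∈ S.cls g, g⁻¹ * k ∈ N} ≤ S.VS :=
  (Subgroup.closure_le _).mpr fun _ hg =>
    by_contra fun hgV => hN (S.derived_le_of_forall_inv_mul_mem hNV hgV hg)

theorem zeta_mono : Monotone S.zeta := by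
  refine monotone_nat_of_le_succ fun i => ?_
  induction i with
  | zero => exact bot_le
  | succ i ih => exact Subgroup.closure_mono fun g hg k hk => ih (hg k hk)

end SCT

theorem zeta_succ_le_VS_general (S : SCT G) (m : ℕ)
    (h : ¬ S.derived ≤ S.zeta m) : S.zeta (m + 1) ≤ S.VS := by
  induction m with
  | zero => exact S.closure_setOf_inv_mul_mem_le_VS bot_le h
  | succ m ih =>
    exact S.closure_setOf_inv_mul_mem_le_VS (ih fun hle => h (hle.trans (S.zeta_mono m.le_succ))) h

/-- if `[G,S] ≰ ζ_m(S)` for some `m ≥ 1`, then `ζ_{m+1}(S) ≤ V(S)`. -/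
theorem zeta_succ_le_VS (S : SCT G) (m : ℕ) (hm : 1 ≤ m)
    (h : ¬ S.derived ≤ S.zeta m) : S.zeta (m + 1) ≤ S.VS :=
  zeta_succ_le_VS_general S m h
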